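/- arXiv:2411.13601 — 5 statements merged into one kernel-verified Lean document; each statement's English description precedes it below -/
import Mathlib

section
/- Let x, y be real numbers with x + y ≠ 0, let k, l ≥ 1 be integers and set m = max{k, l} + 1. Let (Φ_i)_{i=0}^{k−1} and (X_i)_{i=0}^{l−1} be almost surely bounded martingales with respect to the filtration (F_i) satisfying Φ_0 = 0 and X_0 = 0, and let δ be a mean-independent rounding error at time m−1. Define the process (Ψ_i)_{i=0}^{m−1} by Ψ_i = (x/(x+y))·Φ_{min{i,k−1}} + (y/(x+y))·X_{min{i,l−1}} for 0 ≤ i ≤ m−2, and Ψ_{m−1} = (1 + Ψ_{m−2})(1 + δ) − 1. Then (Ψ_i)_{i=0}^{m−1} is a martingale with respect to (F_i). -/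
open MeasureTheory

private lemma min_condexp_aux {Ω : Type*} {m0 : MeasurableSpace Ω} (μ : Measure Ω)
    [IsProbabilityMeasure μ] (F : Filtration ℕ m0) (k : ℕ) (Φ : ℕ → Ω → ℝ)
    (hmeas : ∀ i ≤ k - 1, StronglyMeasurable[F i] (Φ i))
    (hint : ∀ i ≤ k - 1, Integrable (Φ i) μ)
    (hmart : ∀ i, 1 ≤ i → i ≤ k - 1 → μ[Φ i | F (i - 1)] =ᵐ[μ] Φ (i - 1))
    (i : ℕ) (hi : 1 ≤ i) :
    μ[Φ (min i (k - 1)) | F (i - 1)] =ᵐ[μ] Φ (min (i - 1) (k - 1)) := by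
  by_cases h : i ≤ k - 1
  · rw [min_eq_left h, min_eq_left (by omega)]
    exact hmart i hi h
  · push_neg at h
    rw [min_eq_right (by omega), min_eq_right (by omega)]
    have hsm : StronglyMeasurable[F (i - 1)] (Φ (k - 1)) :=
      (hmeas (k - 1) le_rfl).mono (F.mono (by omega))
    rw [condExp_of_stronglyMeasurable (F.le _) hsm (hint _ le_rfl)]

/-- Addition case: the process `Ψ` built from the relative-error martingales `Φ` and `X`
of the two summands, together with a mean-independent rounding error `δ` at time `m-1`,
is a martingale with respect to the filtration `F`. -/
theorem karatsuba_sr_addition_martingale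
    {Ω : Type*} {m0 : MeasurableSpace Ω} (μ : Measure Ω) [IsProbabilityMeasure μ]
    (F : Filtration ℕ m0)
    (x y : ℝ) (hxy : x + y ≠ 0)
    (k l : ℕ) (hk : 1 ≤ k) (hl : 1 ≤ l)
    (m : ℕ) (hm : m = max k l + 1)
    (u : ℝ) (hu0 : 0 < u) (hu1 : u < 1)
    (Φ X : ℕ → Ω → ℝ)
    (hΦ0 : ∀ ω, Φ 0 ω = 0) (hX0 : ∀ ω, X 0 ω = 0)
    -- Φ is an a.s. bounded martingale w.r.t. F on 0..k-1
    (hΦmeas : ∀ i ≤ k - 1, StronglyMeasurable[F i] (Φ i))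
    (hΦint : ∀ i ≤ k - 1, Integrable (Φ i) μ)
    (hΦbdd : ∀ i ≤ k - 1, ∃ C : ℝ, ∀ᵐ ω ∂μ, |Φ i ω| ≤ C)
    (hΦmart : ∀ i, 1 ≤ i → i ≤ k - 1 → μ[Φ i | F (i - 1)] =ᵐ[μ] Φ (i - 1))
    -- X is an a.s. bounded martingale w.r.t. F on 0..l-1
    (hXmeas : ∀ i ≤ l - 1, StronglyMeasurable[F i] (X i))
    (hXint : ∀ i ≤ l - 1, Integrable (X i) μ)
    (hXbdd : ∀ i ≤ l - 1, ∃ C : ℝ, ∀ᵐ ω ∂μ, |X i ω| ≤ C)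
    (hXmart : ∀ i, 1 ≤ i → i ≤ l - 1 → μ[X i | F (i - 1)] =ᵐ[μ] X (i - 1))
    -- δ is a mean-independent rounding error at time m-1
    (δ : Ω → ℝ)
    (hδmeas : StronglyMeasurable[F (m - 1)] δ)
    (hδbdd : ∀ᵐ ω ∂μ, |δ ω| ≤ u)
    (hδmean : μ[δ | F (m - 2)] =ᵐ[μ] 0)
    -- the process Ψ
    (Ψ : ℕ → Ω → ℝ)
    (hΨ : ∀ i ≤ m - 2, ∀ ω,
      Ψ i ω = x / (x + y) * Φ (min i (k - 1)) ω + y / (x + y) * X (min i (l - 1)) ω)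
    (hΨlast : ∀ ω, Ψ (m - 1) ω = (1 + Ψ (m - 2) ω) * (1 + δ ω) - 1) :
    (∀ i ≤ m - 1, StronglyMeasurable[F i] (Ψ i)) ∧
    (∀ i ≤ m - 1, Integrable (Ψ i) μ) ∧
    (∀ i, 1 ≤ i → i ≤ m - 1 → μ[Ψ i | F (i - 1)] =ᵐ[μ] Ψ (i - 1)) := by
  have hm2 : 2 ≤ m := by omega
  set a : ℝ := x / (x + y) with ha
  set b : ℝ := y / (x + y) with hb
  -- function form of Ψ on 0..m-2
  have hΨfun : ∀ i ≤ m - 2,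
      Ψ i = a • Φ (min i (k - 1)) + b • X (min i (l - 1)) := by
    intro i hi
    funext ω
    simp only [Pi.add_apply, Pi.smul_apply, smul_eq_mul]
    exact hΨ i hi ω
  -- strong measurability on 0..m-2
  have hmeas2 : ∀ i ≤ m - 2, StronglyMeasurable[F i] (Ψ i) := by
    intro i hi
    rw [hΨfun i hi]
    have h1 : StronglyMeasurable[F i] (Φ (min i (k - 1))) :=
      (hΦmeas _ (min_le_right _ _)).mono (F.mono (min_le_left _ _))
    have h2 : StronglyMeasurable[F i] (X (min i (l - 1))) :=
      (hXmeas _ (min_le_right _ _)).mono (F.mono (min_le_left _ _))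
    exact (h1.const_smul a).add (h2.const_smul b)
  -- integrability on 0..m-2
  have hint2 : ∀ i ≤ m - 2, Integrable (Ψ i) μ := by
    intro i hi
    rw [hΨfun i hi]
    exact ((hΦint _ (min_le_right _ _)).smul a).add ((hXint _ (min_le_right _ _)).smul b)
  -- δ data
  have hδmeas0 : AEStronglyMeasurable δ μ :=
    (hδmeas.mono (F.le _)).aestronglyMeasurable
  have hδbdd' : ∀ᵐ ω ∂μ, ‖δ ω‖ ≤ u := by
    filter_upwards [hδbdd] with ω h using by simpa [Real.norm_eq_abs] using h
  have hδint : Integrable δ μ :=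
    (integrable_const u).mono' hδmeas0 hδbdd'
  have hprodint : Integrable (Ψ (m - 2) * δ) μ := by
    have := (hint2 (m - 2) le_rfl).bdd_mul hδmeas0 hδbdd'
    refine this.congr ?_
    filter_upwards with ω using by simp [mul_comm]
  -- function form of Ψ (m-1)
  have hΨlastfun : Ψ (m - 1) = Ψ (m - 2) + δ + Ψ (m - 2) * δ := by
    funext ω
    simp only [Pi.add_apply, Pi.mul_apply]
    rw [hΨlast ω]; ring
  have hmeaslast : StronglyMeasurable[F (m - 1)] (Ψ (m - 1)) := by
    rw [hΨlastfun]
    have h2 : StronglyMeasurable[F (m - 1)] (Ψ (m - 2)) :=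
      (hmeas2 _ le_rfl).mono (F.mono (by omega))
    exact (h2.add hδmeas).add (h2.mul hδmeas)
  refine ⟨?_, ?_, ?_⟩
  · intro i hi
    rcases Nat.lt_or_ge i (m - 1) with h | h
    · exact hmeas2 i (by omega)
    · have : i = m - 1 := by omega
      subst this; exact hmeaslast
  · intro i hi
    rcases Nat.lt_or_ge i (m - 1) with h | h
    · exact hint2 i (by omega)
    · have : i = m - 1 := by omega
      subst this
      rw [hΨlastfun]
      exact ((hint2 _ le_rfl).add hδint).add hprodint
  · intro i hi1 hi
    rcases Nat.lt_or_ge i (m - 1) with h | h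
    · -- i ≤ m - 2 : linear case
      rw [hΨfun i (by omega), hΨfun (i - 1) (by omega)]
      have hΦc := min_condexp_aux μ F k Φ hΦmeas hΦint hΦmart i hi1
      have hXc := min_condexp_aux μ F l X hXmeas hXint hXmart i hi1
      have hadd := condExp_add (m := F (i - 1)) (μ := μ)
        ((hΦint (min i (k - 1)) (min_le_right i (k - 1))).smul a)
        ((hXint (min i (l - 1)) (min_le_right i (l - 1))).smul b)
      have hs1 := condExp_smul (μ := μ) (m := F (i - 1)) a (Φ (min i (k - 1)))
      have hs2 := condExp_smul (μ := μ) (m := F (i - 1)) b (X (min i (l - 1)))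
      refine hadd.trans ?_
      filter_upwards [hs1, hs2, hΦc, hXc] with ω e1 e2 e3 e4
      simp only [Pi.add_apply]
      rw [e1, e2]
      simp only [Pi.smul_apply, smul_eq_mul]
      rw [e3, e4]
    · -- i = m - 1 : last step
      have hie : i = m - 1 := by omega
      subst hie
      have h12 : m - 1 - 1 = m - 2 := by omega
      rw [h12, hΨlastfun]
      have hΨm2meas : StronglyMeasurable[F (m - 2)] (Ψ (m - 2)) := hmeas2 _ le_rfl
      have c1 : μ[Ψ (m - 2)|F (m - 2)] = Ψ (m - 2) :=
        condExp_of_stronglyMeasurable (F.le _) hΨm2meas (hint2 _ le_rfl)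
      have cmul := condExp_mul_of_stronglyMeasurable_left (μ := μ) hΨm2meas hprodint hδint
      have hadd1 := condExp_add (m := F (m - 2)) (μ := μ)
        ((hint2 _ le_rfl).add hδint) hprodint
      have hadd2 := condExp_add (m := F (m - 2)) (μ := μ) (hint2 _ le_rfl) hδint
      refine hadd1.trans ?_
      filter_upwards [hadd2, cmul, hδmean] with ω e2 e3 e4
      simp only [Pi.add_apply, Pi.mul_apply, Pi.zero_apply] at *
      rw [e2, e3, c1, e4, mul_zero, add_zero, add_zero]
end

section
/- Let x, y be real numbers with x + y ≠ 0, let k, l ≥ 1 be integers, set m = max{k, l} + 1, and let u ∈ (0,1). Let (Φ_i)_{i=0}^{k−1} and (X_i)_{i=0}^{l−1} be martingales with respect to (F_i) with Φ_0 = 0, X_0 = 0, and suppose there are constants K_x ≥ 1 and K_y ≥ 1 such that almost surely |Φ_i − Φ_{i−1}| ≤ K_x·u·(1+u)^{i−1} for 1 ≤ i ≤ k−1 and |X_i − X_{i−1}| ≤ K_y·u·(1+u)^{i−1} for 1 ≤ i ≤ l−1. Let δ be a mean-independent rounding error at time m−1, and define Ψ_i = (x/(x+y))·Φ_{min{i,k−1}}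 + (y/(x+y))·X_{min{i,l−1}} for 0 ≤ i ≤ m−2 and Ψ_{m−1} = (1 + Ψ_{m−2})(1 + δ) − 1. Then, with K_z = (|x|·K_x + |y|·K_y)/|x+y|, almost surely |Ψ_i − Ψ_{i−1}| ≤ K_z·u·(1+u)^{i−1} for all 1 ≤ i ≤ m−1. -/
open MeasureTheory

/-- Addition case: increment bounds on the martingale `Ψ` built for the last operation
`z ← x + y`, with condition number `K_z = (|x| K_x + |y| K_y)/|x+y|`. -/
theorem karatsuba_sr_addition_increments
    {Ω : Type*} {m0 : MeasurableSpace Ω} (μ : Measure Ω) [IsProbabilityMeasure μ]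
    (F : Filtration ℕ m0)
    (x y : ℝ) (hxy : x + y ≠ 0)
    (k l : ℕ) (hk : 1 ≤ k) (hl : 1 ≤ l)
    (m : ℕ) (hm : m = max k l + 1)
    (u : ℝ) (hu0 : 0 < u) (hu1 : u < 1)
    (Φ X : ℕ → Ω → ℝ)
    (hΦ0 : ∀ ω, Φ 0 ω = 0) (hX0 : ∀ ω, X 0 ω = 0)
    -- Φ is a martingale w.r.t. F on 0..k-1
    (hΦmeas : ∀ i ≤ k - 1, StronglyMeasurable[F i] (Φ i))
    (hΦint : ∀ i ≤ k - 1, Integrable (Φ i) μ)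
    (hΦmart : ∀ i, 1 ≤ i → i ≤ k - 1 → μ[Φ i | F (i - 1)] =ᵐ[μ] Φ (i - 1))
    -- X is a martingale w.r.t. F on 0..l-1
    (hXmeas : ∀ i ≤ l - 1, StronglyMeasurable[F i] (X i))
    (hXint : ∀ i ≤ l - 1, Integrable (X i) μ)
    (hXmart : ∀ i, 1 ≤ i → i ≤ l - 1 → μ[X i | F (i - 1)] =ᵐ[μ] X (i - 1))
    -- increment bounds
    (Kx Ky : ℝ) (hKx : 1 ≤ Kx) (hKy : 1 ≤ Ky)
    (hΦstep : ∀ i, 1 ≤ i → i ≤ k - 1 →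
      ∀ᵐ ω ∂μ, |Φ i ω - Φ (i - 1) ω| ≤ Kx * u * (1 + u) ^ (i - 1))
    (hXstep : ∀ i, 1 ≤ i → i ≤ l - 1 →
      ∀ᵐ ω ∂μ, |X i ω - X (i - 1) ω| ≤ Ky * u * (1 + u) ^ (i - 1))
    -- δ is a mean-independent rounding error at time m-1
    (δ : Ω → ℝ)
    (hδmeas : StronglyMeasurable[F (m - 1)] δ)
    (hδbdd : ∀ᵐ ω ∂μ, |δ ω| ≤ u)
    (hδmean : μ[δ | F (m - 2)] =ᵐ[μ] 0)
    -- the process Ψ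
    (Ψ : ℕ → Ω → ℝ)
    (hΨ : ∀ i ≤ m - 2, ∀ ω,
      Ψ i ω = x / (x + y) * Φ (min i (k - 1)) ω + y / (x + y) * X (min i (l - 1)) ω)
    (hΨlast : ∀ ω, Ψ (m - 1) ω = (1 + Ψ (m - 2) ω) * (1 + δ ω) - 1)
    (Kz : ℝ) (hKz : Kz = (|x| * Kx + |y| * Ky) / |x + y|) :
    ∀ i, 1 ≤ i → i ≤ m - 1 →
      ∀ᵐ ω ∂μ, |Ψ i ω - Ψ (i - 1) ω| ≤ Kz * u * (1 + u) ^ (i - 1) := by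
  have hxy' : (0:ℝ) < |x + y| := abs_pos.mpr hxy
  have hxyne : |x + y| ≠ 0 := ne_of_gt hxy'
  have hKx0 : (0:ℝ) < Kx := lt_of_lt_of_le one_pos hKx
  have hKy0 : (0:ℝ) < Ky := lt_of_lt_of_le one_pos hKy
  have hKz1 : (1:ℝ) ≤ Kz := by
    rw [hKz, le_div_iff₀ hxy']
    have h1 : |x + y| ≤ |x| + |y| := abs_add_le x y
    nlinarith [abs_nonneg x, abs_nonneg y]
  have hKz0 : (0:ℝ) < Kz := lt_of_lt_of_le one_pos hKz1
  have h1u : (1:ℝ) ≤ 1 + u := by linarith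
  have h1u0 : (0:ℝ) < 1 + u := by linarith
  -- step bound for 1 ≤ i ≤ m - 2
  have step : ∀ i, 1 ≤ i → i ≤ m - 2 →
      ∀ᵐ ω ∂μ, |Ψ i ω - Ψ (i - 1) ω| ≤ Kz * u * (1 + u) ^ (i - 1) := by
    intro i hi1 hi2
    have hΦpart : ∀ᵐ ω ∂μ,
        |Φ (min i (k - 1)) ω - Φ (min (i - 1) (k - 1)) ω| ≤ Kx * u * (1 + u) ^ (i - 1) := by
      by_cases hik : i ≤ k - 1
      · rw [min_eq_left hik, min_eq_left (by omega : i - 1 ≤ k - 1)]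
        exact hΦstep i hi1 hik
      · rw [min_eq_right (by omega : k - 1 ≤ i), min_eq_right (by omega : k - 1 ≤ i - 1)]
        filter_upwards with ω
        simp only [sub_self, abs_zero]
        positivity
    have hXpart : ∀ᵐ ω ∂μ,
        |X (min i (l - 1)) ω - X (min (i - 1) (l - 1)) ω| ≤ Ky * u * (1 + u) ^ (i - 1) := by
      by_cases hil : i ≤ l - 1
      · rw [min_eq_left hil, min_eq_left (by omega : i - 1 ≤ l - 1)]
        exact hXstep i hi1 hil
      · rw [min_eq_right (by omega : l - 1 ≤ i), min_eq_right (by omega : l - 1 ≤ i - 1)]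
        filter_upwards with ω
        simp only [sub_self, abs_zero]
        positivity
    filter_upwards [hΦpart, hXpart] with ω hφ hχ
    rw [hΨ i hi2 ω, hΨ (i - 1) (by omega) ω]
    have hrw : x / (x + y) * Φ (min i (k - 1)) ω + y / (x + y) * X (min i (l - 1)) ω -
        (x / (x + y) * Φ (min (i - 1) (k - 1)) ω + y / (x + y) * X (min (i - 1) (l - 1)) ω)
        = x / (x + y) * (Φ (min i (k - 1)) ω - Φ (min (i - 1) (k - 1)) ω) +
          y / (x + y) * (X (min i (l - 1)) ω - X (min (i - 1) (l - 1)) ω) := by ring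
    rw [hrw]
    have habs : |x / (x + y) * (Φ (min i (k - 1)) ω - Φ (min (i - 1) (k - 1)) ω) +
          y / (x + y) * (X (min i (l - 1)) ω - X (min (i - 1) (l - 1)) ω)|
        ≤ |x| / |x + y| * |Φ (min i (k - 1)) ω - Φ (min (i - 1) (k - 1)) ω| +
          |y| / |x + y| * |X (min i (l - 1)) ω - X (min (i - 1) (l - 1)) ω| := by
      refine (abs_add_le _ _).trans ?_
      rw [abs_mul, abs_mul, abs_div, abs_div]
    refine habs.trans ?_
    have h1 : |x| / |x + y| * |Φ (min i (k - 1)) ω - Φ (min (i - 1) (k - 1)) ω|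
        ≤ |x| / |x + y| * (Kx * u * (1 + u) ^ (i - 1)) :=
      mul_le_mul_of_nonneg_left hφ (by positivity)
    have h2 : |y| / |x + y| * |X (min i (l - 1)) ω - X (min (i - 1) (l - 1)) ω|
        ≤ |y| / |x + y| * (Ky * u * (1 + u) ^ (i - 1)) :=
      mul_le_mul_of_nonneg_left hχ (by positivity)
    have heq : |x| / |x + y| * (Kx * u * (1 + u) ^ (i - 1)) +
        |y| / |x + y| * (Ky * u * (1 + u) ^ (i - 1)) = Kz * u * (1 + u) ^ (i - 1) := by
      rw [hKz]; field_simp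
    linarith
  -- global bound on |Ψ n|
  have bnd : ∀ n, n ≤ m - 2 → ∀ᵐ ω ∂μ, |Ψ n ω| ≤ Kz * ((1 + u) ^ n - 1) := by
    intro n
    induction n with
    | zero =>
      intro _
      filter_upwards with ω
      rw [hΨ 0 (Nat.zero_le _) ω]
      simp [Nat.zero_min, hΦ0, hX0]
    | succ n ih =>
      intro hn
      have hstep := step (n + 1) (by omega) hn
      filter_upwards [ih (by omega), hstep] with ω h1 h2
      simp only [Nat.add_sub_cancel] at h2
      have : |Ψ (n + 1) ω| ≤ |Ψ (n + 1) ω - Ψ n ω| + |Ψ n ω| := by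
        have := abs_add_le (Ψ (n + 1) ω - Ψ n ω) (Ψ n ω)
        simpa using this
      have hpow : (1 + u) ^ (n + 1) = (1 + u) ^ n * (1 + u) := pow_succ _ _
      nlinarith [this]
  -- main
  intro i hi1 hi2
  by_cases hcase : i ≤ m - 2
  · exact step i hi1 hcase
  · have him : i = m - 1 := by omega
    subst him
    have hm2 : m - 1 - 1 = m - 2 := by omega
    rw [hm2]
    have hpow1 : (1:ℝ) ≤ (1 + u) ^ (m - 2) := one_le_pow₀ h1u
    filter_upwards [bnd (m - 2) le_rfl, hδbdd] with ω h1 h2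
    have hrw : Ψ (m - 1) ω - Ψ (m - 2) ω = (1 + Ψ (m - 2) ω) * δ ω := by
      rw [hΨlast ω]; ring
    rw [hrw, abs_mul]
    have hb1 : |1 + Ψ (m - 2) ω| ≤ Kz * (1 + u) ^ (m - 2) := by
      have := abs_add_le (1:ℝ) (Ψ (m - 2) ω)
      simp only [abs_one] at this
      nlinarith
    calc |1 + Ψ (m - 2) ω| * |δ ω| ≤ (Kz * (1 + u) ^ (m - 2)) * u := by
          apply mul_le_mul hb1 h2 (abs_nonneg _) (by positivity)
      _ = Kz * u * (1 + u) ^ (m - 2) := by ring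
end

section
/- Let x, y be real numbers with x + y ≠ 0, let k, l ≥ 1 be integers, set m = max{k, l} + 1, and let u ∈ (0,1). Let (Φ_i)_{i=0}^{k−1} and (X_i)_{i=0}^{l−1} be martingales with respect to (F_i) with Φ_0 = 0, X_0 = 0, whose increments satisfy almost surely |Φ_i − Φ_{i−1}| ≤ K_x·u·(1+u)^{i−1} and |X_i − X_{i−1}| ≤ K_y·u·(1+u)^{i−1} for constants K_x, K_y ≥ 1. Let δ be a mean-independent rounding error at time m−1, let Φ = Φ_{k−1}, X = X_{l−1}, and let Ψ = (1 + (x/(x+y))·Φ + (y/(x+y))·X)(1 + δ) − 1 (the relative error of the computed sum ẑ of x(1+Φ) and y(1+X) under stochastic rounding, ẑ = (x+y)(1+Ψ)). Set K_z = (|x|·K_x + |y|·K_y)/|x+y|. Then for every λ ∈ (0,1), with probability at least 1 − λ, |Ψ| ≤ K_z·√(u·γ_{2(m−1)}(u))·√(ln(2/λ)). -/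
/-!
Freeze `Φ` and `X` after their last index; with `a = x/(x+y)` and `b = y/(x+y)` the process
`S = aΦ + bX` is then a martingale whose `i`-th increment is bounded by `K_z u (1+u)^i`, where
`K_z = |a| K_x + |b| K_y ≥ |a + b| = 1`. The computed sum adds one more increment,
`Ψ - S = (1 + S) δ`, which is conditionally centred and bounded by `u (1 + K_z ((1+u)^(m-2) - 1))
≤ K_z u (1+u)^(m-2)`. Azuma–Hoeffding makes `Ψ` sub-Gaussian with variance proxy
`∑_{i < m-1} (K_z u (1+u)^i)^2 ≤ K_z^2 u γ_{2(m-1)}(u) / 2`, and the Chernoff bound on both tails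
gives the claim.
-/

open MeasureTheory ProbabilityTheory Real Finset
open scoped NNReal

theorem Real.exp_le_cosh_add_div_mul_sinh {c z : ℝ} (hz : |z| ≤ c) :
    exp z ≤ cosh c + z / c * sinh c := by
  rcases (abs_nonneg z).trans hz |>.eq_or_lt with rfl | hc
  · simp [abs_nonpos_iff.mp hz]
  obtain ⟨hzl, hzr⟩ := abs_le.mp hz
  set θ := (z + c) / (2 * c)
  have hθ0 : 0 ≤ θ := div_nonneg (by linarith) (by positivity)
  have hθ1 : θ ≤ 1 := by rw [div_le_one (by positivity)]; linarith
  have hconv := convexOn_exp.2 (Set.mem_univ c) (Set.mem_univ (-c)) hθ0 (sub_nonneg.2 hθ1)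
    (add_sub_cancel θ 1)
  have hz_eq : θ • c + (1 - θ) • -c = z := by simp only [θ, smul_eq_mul]; field_simp; ring
  rw [hz_eq] at hconv
  refine hconv.trans_eq ?_
  simp only [θ, smul_eq_mul, cosh_eq, sinh_eq]
  field_simp
  ring

section

variable {Ω : Type*} {m0 : MeasurableSpace Ω} {μ : Measure Ω}

theorem integral_exp_add_le_of_condExp_eq_zero [IsFiniteMeasure μ] {m : MeasurableSpace Ω}
    (hm : m ≤ m0) {f g : Ω → ℝ} {c : ℝ} (hf : StronglyMeasurable[m] f)
    (hf_int : Integrable (fun ω ↦ exp (f ω)) μ) (hg : AEStronglyMeasurable[m0] g μ)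
    (hg_bdd : ∀ᵐ ω ∂μ, |g ω| ≤ c) (hg_zero : μ[g | m] =ᵐ[μ] 0) :
    ∫ ω, exp (f ω + g ω) ∂μ ≤ (∫ ω, exp (f ω) ∂μ) * exp (c ^ 2 / 2) := by
  have hexp_f : StronglyMeasurable[m] fun ω ↦ exp (f ω) := continuous_exp.comp_stronglyMeasurable hf
  have hfg_int : Integrable (fun ω ↦ exp (f ω) * g ω) μ :=
    hf_int.mul_bdd hg (by simpa only [Real.norm_eq_abs] using hg_bdd)
  have hexp_fg_int : Integrable (fun ω ↦ exp (f ω + g ω)) μ := by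
    simp only [exp_add]
    refine hf_int.mul_bdd (continuous_exp.comp_aestronglyMeasurable hg) (c := exp c) ?_
    filter_upwards [hg_bdd] with ω hω
    rw [Real.norm_eq_abs, abs_exp]
    exact exp_le_exp.2 ((le_abs_self _).trans hω)
  have hcross : ∫ ω, exp (f ω) * g ω ∂μ = 0 := by
    have hpull : μ[(fun ω ↦ exp (f ω)) * g | m] =ᵐ[μ] 0 := by
      filter_upwards [condExp_mul_of_stronglyMeasurable_left hexp_f hfg_int
        (Integrable.of_bound hg c (by simpa only [Real.norm_eq_abs] using hg_bdd)), hg_zero]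
        with ω h1 h2
      simp [h1, h2]
    rw [← integral_condExp hm]
    exact (integral_congr_ae hpull).trans (by simp)
  -- Averaging the chord bound `exp g ≤ cosh c + (g / c) sinh c` kills the linear term.
  have hchord : ∀ᵐ ω ∂μ, exp (f ω + g ω)
      ≤ cosh c * exp (f ω) + sinh c / c * (exp (f ω) * g ω) := by
    filter_upwards [hg_bdd] with ω hω
    rw [exp_add]
    exact (mul_le_mul_of_nonneg_left (exp_le_cosh_add_div_mul_sinh hω) (exp_pos (f ω)).le).trans_eq
      (by ring)
  calc ∫ ω, exp (f ω + g ω) ∂μ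
      ≤ ∫ ω, (cosh c * exp (f ω) + sinh c / c * (exp (f ω) * g ω)) ∂μ :=
        integral_mono_ae hexp_fg_int ((hf_int.const_mul _).add (hfg_int.const_mul _)) hchord
    _ = cosh c * ∫ ω, exp (f ω) ∂μ := by
        rw [integral_add (hf_int.const_mul _) (hfg_int.const_mul _), integral_const_mul,
          integral_const_mul, hcross, mul_zero, add_zero]
    _ ≤ (∫ ω, exp (f ω) ∂μ) * exp (c ^ 2 / 2) := by
        rw [mul_comm]
        exact mul_le_mul_of_nonneg_left (cosh_le_exp_half_sq c)
          (integral_nonneg fun ω ↦ (exp_pos _).le)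

theorem ProbabilityTheory.HasSubgaussianMGF.mono {X : Ω → ℝ} {c c' : ℝ≥0}
    (h : HasSubgaussianMGF X c μ) (hc : c ≤ c') : HasSubgaussianMGF X c' μ where
  integrable_exp_mul := h.integrable_exp_mul
  mgf_le t := (h.mgf_le t).trans <| exp_le_exp.2 <| by gcongr

/-- A replacement for `HasSubgaussianMGF.add_of_hasCondSubgaussianMGF` that needs no
`StandardBorelSpace Ω`: a bounded increment that is conditionally centred is conditionally
sub-Gaussian by Hoeffding's convexity argument. -/
theorem ProbabilityTheory.HasSubgaussianMGF.add_of_condExp_eq_zero [IsFiniteMeasure μ]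
    {m : MeasurableSpace Ω} (hm : m ≤ m0) {X Y : Ω → ℝ} {cX cY : ℝ≥0}
    (hX : HasSubgaussianMGF X cX μ) (hXm : StronglyMeasurable[m] X)
    (hY : AEStronglyMeasurable[m0] Y μ) (hY_bdd : ∀ᵐ ω ∂μ, |Y ω| ≤ cY)
    (hY_zero : μ[Y | m] =ᵐ[μ] 0) :
    HasSubgaussianMGF (X + Y) (cX + cY ^ 2) μ where
  integrable_exp_mul t := by
    simp only [Pi.add_apply, mul_add, exp_add]
    refine (hX.integrable_exp_mul t).mul_bdd
      (continuous_exp.comp_aestronglyMeasurable (hY.const_mul t)) (c := exp (|t| * cY)) ?_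
    filter_upwards [hY_bdd] with ω hω
    rw [Real.norm_eq_abs, abs_exp, exp_le_exp]
    exact (le_abs_self _).trans (abs_mul t _ ▸ mul_le_mul_of_nonneg_left hω (abs_nonneg t))
  mgf_le t := by
    have htY_bdd : ∀ᵐ ω ∂μ, |t * Y ω| ≤ |t| * cY := by
      filter_upwards [hY_bdd] with ω hω
      exact abs_mul t _ ▸ mul_le_mul_of_nonneg_left hω (abs_nonneg t)
    have htY_zero : μ[fun ω ↦ t * Y ω | m] =ᵐ[μ] 0 := by
      show μ[t • Y | m] =ᵐ[μ] 0
      filter_upwards [condExp_smul (m := m) (μ := μ) t Y, hY_zero] with ω h1 h2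
      simpa [h2] using h1
    calc mgf (X + Y) μ t = ∫ ω, exp (t * X ω + t * Y ω) ∂μ := by simp [mgf, mul_add]
      _ ≤ mgf X μ t * exp ((|t| * cY) ^ 2 / 2) :=
        integral_exp_add_le_of_condExp_eq_zero hm (hXm.const_mul t) (hX.integrable_exp_mul t)
          (hY.const_mul t) htY_bdd htY_zero
      _ ≤ exp (cX * t ^ 2 / 2) * exp (cY ^ 2 * t ^ 2 / 2) := by
        gcongr
        · exact hX.mgf_le t
        · rw [mul_pow, sq_abs]; linarith
      _ = exp (↑(cX + cY ^ 2) * t ^ 2 / 2) := by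
        rw [← exp_add, NNReal.coe_add, NNReal.coe_pow]; congr 1; ring

theorem MeasureTheory.Martingale.condExp_succ_sub_eq_zero [IsFiniteMeasure μ]
    {F : Filtration ℕ m0} {M : ℕ → Ω → ℝ} (hM : Martingale M F μ) (i : ℕ) :
    μ[M (i + 1) - M i | F i] =ᵐ[μ] 0 := by
  filter_upwards [condExp_sub (m := F i) (hM.integrable (i + 1)) (hM.integrable i),
    hM.condExp_ae_eq i.le_succ] with ω h1 h2
  rw [h1, Pi.sub_apply, h2,
    condExp_of_stronglyMeasurable (F.le i) (hM.stronglyMeasurable i) (hM.integrable i),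
    Pi.zero_apply, sub_self]

theorem ae_abs_le_sum_of_abs_sub_le {M : ℕ → Ω → ℝ} (h0 : M 0 = 0) {c : ℕ → ℝ} {n : ℕ}
    (hbdd : ∀ i < n, ∀ᵐ ω ∂μ, |M (i + 1) ω - M i ω| ≤ c i) :
    ∀ᵐ ω ∂μ, |M n ω| ≤ ∑ i ∈ range n, c i := by
  induction n with
  | zero => simp [h0]
  | succ n ih =>
    filter_upwards [ih fun i hi ↦ hbdd i (by omega), hbdd n n.lt_succ_self] with ω h1 h2
    rw [sum_range_succ]
    calc |M (n + 1) ω| = |M n ω + (M (n + 1) ω - M n ω)| := by rw [add_sub_cancel]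
      _ ≤ _ := (abs_add_le _ _).trans (add_le_add h1 h2)

theorem MeasureTheory.Martingale.hasSubgaussianMGF [IsProbabilityMeasure μ]
    {F : Filtration ℕ m0} {M : ℕ → Ω → ℝ} (hM : Martingale M F μ) (h0 : M 0 = 0)
    {c : ℕ → ℝ≥0} {n : ℕ} (hbdd : ∀ i < n, ∀ᵐ ω ∂μ, |M (i + 1) ω - M i ω| ≤ c i) :
    HasSubgaussianMGF (M n) (∑ i ∈ range n, c i ^ 2) μ := by
  induction n with
  | zero => simp [h0]
  | succ n ih =>
    rw [sum_range_succ, ← add_sub_cancel (M n) (M (n + 1))]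
    exact (ih fun i hi ↦ hbdd i (by omega)).add_of_condExp_eq_zero (F.le n)
      (hM.stronglyMeasurable n)
      (((hM.stronglyMeasurable _).mono (F.le _)).sub
        ((hM.stronglyMeasurable n).mono (F.le n))).aestronglyMeasurable
      (hbdd n n.lt_succ_self) (hM.condExp_succ_sub_eq_zero n)

theorem ProbabilityTheory.HasSubgaussianMGF.one_sub_two_mul_exp_le_measureReal_abs_le
    [IsProbabilityMeasure μ] {X : Ω → ℝ} {c : ℝ≥0} (h : HasSubgaussianMGF X c μ) {ε : ℝ}
    (hε : 0 ≤ ε) : 1 - 2 * exp (-ε ^ 2 / (2 * c)) ≤ μ.real {ω | |X ω| ≤ ε} := by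
  set s := {ω | |X ω| ≤ ε}
  have hcompl : sᶜ ⊆ {ω | ε ≤ X ω} ∪ {ω | ε ≤ (-X) ω} := by
    intro ω hω
    simp only [s, Set.mem_compl_iff, Set.mem_ofPred_eq, not_le, lt_abs] at hω
    rcases hω with hω | hω
    · exact Or.inl hω.le
    · exact Or.inr hω.le
  have hs : 1 ≤ μ.real s + μ.real sᶜ := by simpa using measureReal_union_le (μ := μ) s sᶜ
  have hsc : μ.real sᶜ ≤ 2 * exp (-ε ^ 2 / (2 * c)) :=
    (measureReal_mono hcompl).trans <| (measureReal_union_le _ _).trans <| by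
      linarith [h.measure_ge_le hε, h.neg.measure_ge_le hε]
  linarith

theorem ProbabilityTheory.HasSubgaussianMGF.one_sub_le_measureReal_abs_le_mul_sqrt_log
    [IsProbabilityMeasure μ] {X : Ω → ℝ} {c : ℝ≥0} (h : HasSubgaussianMGF X c μ) {σ : ℝ}
    (hσ : 0 < σ) (hc : 2 * c ≤ σ ^ 2) {lam : ℝ} (hlam0 : 0 < lam) (hlam2 : lam ≤ 2) :
    1 - lam ≤ μ.real {ω | |X ω| ≤ σ * √(log (2 / lam))} := by
  have hlog : 0 ≤ log (2 / lam) := log_nonneg ((one_le_div hlam0).2 hlam2)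
  have hmono : c ≤ (σ ^ 2 / 2).toNNReal := by
    rw [← NNReal.coe_le_coe, Real.coe_toNNReal _ (by positivity)]; linarith
  have hratio : (σ * √(log (2 / lam))) ^ 2 / (2 * (σ ^ 2 / 2)) = log (2 / lam) := by
    rw [mul_pow, sq_sqrt hlog]; field_simp
  have htail := (h.mono hmono).one_sub_two_mul_exp_le_measureReal_abs_le
    (ε := σ * √(log (2 / lam))) (by positivity)
  rwa [Real.coe_toNNReal _ (by positivity), neg_div, hratio, exp_neg, exp_log (by positivity),
    inv_div, mul_div_cancel₀ _ two_ne_zero] at htail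

theorem martingale_comp_min [IsFiniteMeasure μ] {F : Filtration ℕ m0} {f : ℕ → Ω → ℝ} {N : ℕ}
    (hmeas : ∀ i ≤ N, StronglyMeasurable[F i] (f i)) (hint : ∀ i ≤ N, Integrable (f i) μ)
    (hmart : ∀ i, 1 ≤ i → i ≤ N → μ[f i | F (i - 1)] =ᵐ[μ] f (i - 1)) :
    Martingale (fun i ↦ f (min i N)) F μ := by
  have hadapted : StronglyAdapted F fun i ↦ f (min i N) := fun i ↦
    (hmeas _ (min_le_right i N)).mono (F.mono (min_le_left i N))
  refine martingale_nat hadapted (fun i ↦ hint _ (min_le_right i N)) fun i ↦ ?_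
  rcases lt_or_ge i N with hi | hi
  · simpa [min_eq_left hi.le, min_eq_left (Nat.succ_le_of_lt hi)] using
      (hmart (i + 1) (by omega) hi).symm
  · have hfN : μ[f N | F i] = f N :=
      condExp_of_stronglyMeasurable (F.le i) ((hmeas N le_rfl).mono (F.mono hi)) (hint N le_rfl)
    rw [min_eq_right hi, min_eq_right (hi.trans i.le_succ), hfN]

theorem ae_abs_comp_min_succ_sub_le {f : ℕ → Ω → ℝ} {N : ℕ} {c : ℕ → ℝ} (hc : ∀ i, 0 ≤ c i)
    (hstep : ∀ i, 1 ≤ i → i ≤ N → ∀ᵐ ω ∂μ, |f i ω - f (i - 1) ω| ≤ c (i - 1)) (i : ℕ) :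
    ∀ᵐ ω ∂μ, |f (min (i + 1) N) ω - f (min i N) ω| ≤ c i := by
  rcases lt_or_ge i N with hi | hi
  · simpa [min_eq_left hi.le, min_eq_left (Nat.succ_le_of_lt hi)] using
      hstep (i + 1) (by omega) hi
  · simp [min_eq_right hi, min_eq_right (hi.trans i.le_succ), hc i]

theorem ae_abs_smul_add_smul_succ_sub_le {P Q : ℕ → Ω → ℝ} {i : ℕ} {cP cQ : ℝ} (a b : ℝ)
    (hP : ∀ᵐ ω ∂μ, |P (i + 1) ω - P i ω| ≤ cP) (hQ : ∀ᵐ ω ∂μ, |Q (i + 1) ω - Q i ω| ≤ cQ) :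
    ∀ᵐ ω ∂μ, |(a • P + b • Q) (i + 1) ω - (a • P + b • Q) i ω| ≤ |a| * cP + |b| * cQ := by
  filter_upwards [hP, hQ] with ω hPω hQω
  calc |(a • P + b • Q) (i + 1) ω - (a • P + b • Q) i ω|
      = |a * (P (i + 1) ω - P i ω) + b * (Q (i + 1) ω - Q i ω)| := by
        simp only [Pi.add_apply, Pi.smul_apply, smul_eq_mul]; congr 1; ring
    _ ≤ |a| * cP + |b| * cQ := by
      refine (abs_add_le _ _).trans ?_
      rw [abs_mul, abs_mul]
      gcongr

/-- The rounding step `S ↦ (1 + S)(1 + δ) - 1` adds the increment `(1 + S N) δ`, which is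
conditionally centred because `1 + S N` is known at time `N`. -/
theorem MeasureTheory.Martingale.hasSubgaussianMGF_one_add_mul_one_add_sub_one
    [IsProbabilityMeasure μ] {F : Filtration ℕ m0} {S : ℕ → Ω → ℝ} (hS : Martingale S F μ)
    (hS0 : S 0 = 0) {c : ℕ → ℝ≥0} {N : ℕ}
    (hbdd : ∀ i < N, ∀ᵐ ω ∂μ, |S (i + 1) ω - S i ω| ≤ c i) {u : ℝ}
    (hu : u * (1 + ∑ i ∈ range N, (c i : ℝ)) ≤ c N) {δ : Ω → ℝ} (hδ : AEStronglyMeasurable δ μ)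
    (hδ_bdd : ∀ᵐ ω ∂μ, |δ ω| ≤ u) (hδ_zero : μ[δ | F N] =ᵐ[μ] 0) :
    HasSubgaussianMGF (fun ω ↦ (1 + S N ω) * (1 + δ ω) - 1) (∑ i ∈ range (N + 1), c i ^ 2) μ := by
  have hfactor : StronglyMeasurable[F N] fun ω ↦ 1 + S N ω :=
    stronglyMeasurable_const.add (hS.stronglyMeasurable N)
  have hY : AEStronglyMeasurable ((fun ω ↦ 1 + S N ω) * δ) μ :=
    (hfactor.mono (F.le N)).aestronglyMeasurable.mul hδ
  have hY_bdd : ∀ᵐ ω ∂μ, |((fun ω ↦ 1 + S N ω) * δ) ω| ≤ c N := by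
    filter_upwards [ae_abs_le_sum_of_abs_sub_le hS0 hbdd, hδ_bdd] with ω hSω hδω
    rw [Pi.mul_apply, abs_mul, mul_comm]
    refine le_trans ?_ hu
    gcongr
    · exact (abs_nonneg _).trans hδω
    · exact (abs_add_le _ _).trans (by rw [abs_one]; linarith)
  have hY_zero : μ[(fun ω ↦ 1 + S N ω) * δ | F N] =ᵐ[μ] 0 := by
    filter_upwards [condExp_mul_of_stronglyMeasurable_left hfactor
      (Integrable.of_bound hY _ (by simpa only [Real.norm_eq_abs] using hY_bdd))
      (Integrable.of_bound hδ u (by simpa only [Real.norm_eq_abs] using hδ_bdd)), hδ_zero]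
      with ω h1 h2
    simp [h1, h2]
  rw [sum_range_succ]
  convert (hS.hasSubgaussianMGF hS0 hbdd).add_of_condExp_eq_zero (F.le N)
    (hS.stronglyMeasurable N) hY hY_bdd hY_zero using 1
  funext ω
  simp only [Pi.add_apply, Pi.mul_apply]
  ring

end

theorem mul_one_add_sum_mul_pow_le {K u : ℝ} (hK : 1 ≤ K) (hu : 0 ≤ u) (N : ℕ) :
    u * (1 + ∑ i ∈ range N, K * u * (1 + u) ^ i) ≤ K * u * (1 + u) ^ N := by
  have hgeom : ∑ i ∈ range N, K * u * (1 + u) ^ i = K * ((1 + u) ^ N - 1) := by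
    rw [← geom_sum_mul, add_sub_cancel_left, sum_mul, mul_sum]
    exact sum_congr rfl fun i _ ↦ by ring
  rw [hgeom]
  nlinarith [mul_le_mul_of_nonneg_left hK hu]

theorem two_mul_sum_sq_mul_pow_le (K : ℝ) {u : ℝ} (hu : 0 ≤ u) (n : ℕ) :
    2 * ∑ i ∈ range n, (K * u * (1 + u) ^ i) ^ 2 ≤ K ^ 2 * (u * ((1 + u) ^ (2 * n) - 1)) := by
  induction n with
  | zero => simp
  | succ n ih =>
    have hpow : (1 + u) ^ (2 * (n + 1)) = (1 + u) ^ (2 * n) * (1 + u) ^ 2 := by ring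
    have hsq : (K * u * (1 + u) ^ n) ^ 2 = K ^ 2 * u ^ 2 * (1 + u) ^ (2 * n) := by ring
    have hgap : 0 ≤ K ^ 2 * u ^ 3 * (1 + u) ^ (2 * n) := by positivity
    rw [sum_range_succ, mul_add, hpow, hsq]
    linear_combination ih + hgap

theorem one_le_abs_mul_add_abs_mul {a b Ka Kb : ℝ} (hab : a + b = 1) (hKa : 1 ≤ Ka)
    (hKb : 1 ≤ Kb) : 1 ≤ |a| * Ka + |b| * Kb :=
  calc 1 = |a + b| := by rw [hab, abs_one]
    _ ≤ |a| + |b| := abs_add_le a b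
    _ ≤ |a| * Ka + |b| * Kb := by
      gcongr <;> exact le_mul_of_one_le_right (abs_nonneg _) ‹_›

theorem karatsuba_sr_addition_probabilistic_bound_general
    {Ω : Type*} {m0 : MeasurableSpace Ω} (μ : Measure Ω) [IsProbabilityMeasure μ]
    (F : Filtration ℕ m0)
    (x y : ℝ) (hxy : x + y ≠ 0)
    (k l : ℕ) (hk : 1 ≤ k)
    (m : ℕ) (hm : m = max k l + 1)
    (u : ℝ) (hu0 : 0 < u)
    (Φ X : ℕ → Ω → ℝ)
    (hΦ0 : ∀ ω, Φ 0 ω = 0) (hX0 : ∀ ω, X 0 ω = 0)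
    -- Φ is a martingale w.r.t. F on 0..k-1
    (hΦmeas : ∀ i ≤ k - 1, StronglyMeasurable[F i] (Φ i))
    (hΦint : ∀ i ≤ k - 1, Integrable (Φ i) μ)
    (hΦmart : ∀ i, 1 ≤ i → i ≤ k - 1 → μ[Φ i | F (i - 1)] =ᵐ[μ] Φ (i - 1))
    -- X is a martingale w.r.t. F on 0..l-1
    (hXmeas : ∀ i ≤ l - 1, StronglyMeasurable[F i] (X i))
    (hXint : ∀ i ≤ l - 1, Integrable (X i) μ)
    (hXmart : ∀ i, 1 ≤ i → i ≤ l - 1 → μ[X i | F (i - 1)] =ᵐ[μ] X (i - 1))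
    -- increment bounds
    (Kx Ky : ℝ) (hKx : 1 ≤ Kx) (hKy : 1 ≤ Ky)
    (hΦstep : ∀ i, 1 ≤ i → i ≤ k - 1 →
      ∀ᵐ ω ∂μ, |Φ i ω - Φ (i - 1) ω| ≤ Kx * u * (1 + u) ^ (i - 1))
    (hXstep : ∀ i, 1 ≤ i → i ≤ l - 1 →
      ∀ᵐ ω ∂μ, |X i ω - X (i - 1) ω| ≤ Ky * u * (1 + u) ^ (i - 1))
    -- δ is a mean-independent rounding error at time m-1
    (δ : Ω → ℝ)
    (hδmeas : StronglyMeasurable[F (m - 1)] δ)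
    (hδbdd : ∀ᵐ ω ∂μ, |δ ω| ≤ u)
    (hδmean : μ[δ | F (m - 2)] =ᵐ[μ] 0)
    -- relative error of the computed sum
    (Ψ : Ω → ℝ)
    (hΨ : ∀ ω, Ψ ω =
      (1 + x / (x + y) * Φ (k - 1) ω + y / (x + y) * X (l - 1) ω) * (1 + δ ω) - 1)
    (Kz : ℝ) (hKz : Kz = (|x| * Kx + |y| * Ky) / |x + y|)
    (lam : ℝ) (hlam0 : 0 < lam) (hlam1 : lam < 1) :
    ENNReal.ofReal (1 - lam) ≤
      μ {ω | |Ψ ω| ≤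
        Kz * Real.sqrt (u * ((1 + u) ^ (2 * (m - 1)) - 1)) * Real.sqrt (Real.log (2 / lam))} := by
  set a := x / (x + y)
  set b := y / (x + y)
  have hKz_eq : Kz = |a| * Kx + |b| * Ky := by rw [hKz, abs_div, abs_div]; ring
  have hKz1 : 1 ≤ Kz :=
    hKz_eq ▸ one_le_abs_mul_add_abs_mul (by rw [← add_div, div_self hxy]) hKx hKy
  obtain ⟨N, hN⟩ : ∃ N, max k l = N + 1 := ⟨_, (Nat.sub_add_cancel (le_max_of_le_left hk)).symm⟩
  obtain ⟨hm1, hm2⟩ : m - 1 = N + 1 ∧ m - 2 = N := by omega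
  let c : ℕ → ℝ≥0 := fun i ↦ ⟨Kz * u * (1 + u) ^ i, by positivity⟩
  set S := a • (fun i ↦ Φ (min i (k - 1))) + b • fun i ↦ X (min i (l - 1))
  have hS : Martingale S F μ := ((martingale_comp_min hΦmeas hΦint hΦmart).smul a).add
    ((martingale_comp_min hXmeas hXint hXmart).smul b)
  have hS0 : S 0 = 0 := by funext ω; simp [S, hΦ0, hX0]
  have hS_bdd (i : ℕ) : ∀ᵐ ω ∂μ, |S (i + 1) ω - S i ω| ≤ c i := by
    have hΦ_bdd := ae_abs_comp_min_succ_sub_le (c := fun j ↦ Kx * u * (1 + u) ^ j)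
      (fun _ ↦ by positivity) hΦstep i
    have hX_bdd := ae_abs_comp_min_succ_sub_le (c := fun j ↦ Ky * u * (1 + u) ^ j)
      (fun _ ↦ by positivity) hXstep i
    filter_upwards [ae_abs_smul_add_smul_succ_sub_le (P := fun i ↦ Φ (min i (k - 1)))
      (Q := fun i ↦ X (min i (l - 1))) a b hΦ_bdd hX_bdd] with ω h
    exact h.trans_eq (show _ = Kz * u * (1 + u) ^ i by rw [hKz_eq]; ring)
  have hΨ_subG : HasSubgaussianMGF Ψ (∑ i ∈ range (N + 1), c i ^ 2) μ := by
    convert hS.hasSubgaussianMGF_one_add_mul_one_add_sub_one hS0 (fun i _ ↦ hS_bdd i)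
      (mul_one_add_sum_mul_pow_le hKz1 hu0.le N) ((hδmeas.mono (F.le _)).aestronglyMeasurable)
      hδbdd (hm2 ▸ hδmean) using 1
    funext ω
    rw [hΨ]
    simp only [S, Pi.add_apply, Pi.smul_apply, smul_eq_mul,
      min_eq_right (show k - 1 ≤ N by omega), min_eq_right (show l - 1 ≤ N by omega)]
    ring
  have hσ : 0 < Kz * √(u * ((1 + u) ^ (2 * (N + 1)) - 1)) :=
    mul_pos (by linarith) <| sqrt_pos.2 <| mul_pos hu0 <|
      sub_pos.2 (one_lt_pow₀ (by linarith) (by omega))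
  rw [hm1]
  refine ENNReal.ofReal_le_of_le_toReal <| hΨ_subG.one_sub_le_measureReal_abs_le_mul_sqrt_log
    hσ ?_ hlam0 (by linarith)
  rw [mul_pow, sq_sqrt (sqrt_pos.1 (pos_of_mul_pos_right hσ (by linarith))).le]
  push_cast
  exact two_mul_sum_sq_mul_pow_le Kz hu0.le (N + 1)

/-- Addition case (Corollary 1): probabilistic bound for the relative error `Ψ` of the
computed sum `ẑ = (x+y)(1+Ψ)` under stochastic rounding, where
`γ_N(u) = (1+u)^N - 1` and `K_z = (|x| K_x + |y| K_y)/|x+y|`. -/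
theorem karatsuba_sr_addition_probabilistic_bound
    {Ω : Type*} {m0 : MeasurableSpace Ω} (μ : Measure Ω) [IsProbabilityMeasure μ]
    (F : Filtration ℕ m0)
    (x y : ℝ) (hxy : x + y ≠ 0)
    (k l : ℕ) (hk : 1 ≤ k) (hl : 1 ≤ l)
    (m : ℕ) (hm : m = max k l + 1)
    (u : ℝ) (hu0 : 0 < u) (hu1 : u < 1)
    (Φ X : ℕ → Ω → ℝ)
    (hΦ0 : ∀ ω, Φ 0 ω = 0) (hX0 : ∀ ω, X 0 ω = 0)
    -- Φ is a martingale w.r.t. F on 0..k-1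
    (hΦmeas : ∀ i ≤ k - 1, StronglyMeasurable[F i] (Φ i))
    (hΦint : ∀ i ≤ k - 1, Integrable (Φ i) μ)
    (hΦmart : ∀ i, 1 ≤ i → i ≤ k - 1 → μ[Φ i | F (i - 1)] =ᵐ[μ] Φ (i - 1))
    -- X is a martingale w.r.t. F on 0..l-1
    (hXmeas : ∀ i ≤ l - 1, StronglyMeasurable[F i] (X i))
    (hXint : ∀ i ≤ l - 1, Integrable (X i) μ)
    (hXmart : ∀ i, 1 ≤ i → i ≤ l - 1 → μ[X i | F (i - 1)] =ᵐ[μ] X (i - 1))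
    -- increment bounds
    (Kx Ky : ℝ) (hKx : 1 ≤ Kx) (hKy : 1 ≤ Ky)
    (hΦstep : ∀ i, 1 ≤ i → i ≤ k - 1 →
      ∀ᵐ ω ∂μ, |Φ i ω - Φ (i - 1) ω| ≤ Kx * u * (1 + u) ^ (i - 1))
    (hXstep : ∀ i, 1 ≤ i → i ≤ l - 1 →
      ∀ᵐ ω ∂μ, |X i ω - X (i - 1) ω| ≤ Ky * u * (1 + u) ^ (i - 1))
    -- δ is a mean-independent rounding error at time m-1
    (δ : Ω → ℝ)
    (hδmeas : StronglyMeasurable[F (m - 1)] δ)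
    (hδbdd : ∀ᵐ ω ∂μ, |δ ω| ≤ u)
    (hδmean : μ[δ | F (m - 2)] =ᵐ[μ] 0)
    -- relative error of the computed sum
    (Ψ : Ω → ℝ)
    (hΨ : ∀ ω, Ψ ω =
      (1 + x / (x + y) * Φ (k - 1) ω + y / (x + y) * X (l - 1) ω) * (1 + δ ω) - 1)
    (Kz : ℝ) (hKz : Kz = (|x| * Kx + |y| * Ky) / |x + y|)
    (lam : ℝ) (hlam0 : 0 < lam) (hlam1 : lam < 1) :
    ENNReal.ofReal (1 - lam) ≤
      μ {ω | |Ψ ω| ≤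
        Kz * Real.sqrt (u * ((1 + u) ^ (2 * (m - 1)) - 1)) * Real.sqrt (Real.log (2 / lam))} :=
  karatsuba_sr_addition_probabilistic_bound_general μ F x y hxy k l hk m hm u hu0 Φ X hΦ0 hX0 hΦmeas
    hΦint hΦmart hXmeas hXint hXmart Kx Ky hKx hKy hΦstep hXstep δ hδmeas hδbdd hδmean Ψ hΨ Kz hKz
    lam hlam0 hlam1
end

section
/- Let k, l ≥ 1 be integers, set m = k + l + 1, and let u ∈ (0,1). Let (Φ_i)_{i=0}^{k−1} with Φ_0 = 0 and (X_j)_{j=0}^{l−1} with X_0 = 0 be as in the multiplication martingale construction (Φ a martingale for (F_i), X_j F_{k−1+j}-measurable with E[X_j | F_{k−2+j}] = X_{j−1}), and suppose there are constants K_x ≥ 1 and K_y ≥ 1 such that almost surely |Φ_i − Φ_{i−1}| ≤ K_x·u·(1+u)^{i−1} for 1 ≤ i ≤ k−1 and |X_j − X_{j−1}| ≤ K_y·u·(1+u)^{j−1} for 1 ≤ j ≤ l−1. Let δ be a mean-independent rounding error at time m−1 and define Ψ_i = Φ_i for 0 ≤ i ≤ k−1; Ψ_i = (1 + Φ_{k−1})(1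 + X_{i−k}) − 1 for k ≤ i ≤ m−2; Ψ_{m−1} = (1 + Φ_{k−1})(1 + X_{l−1})(1 + δ) − 1. Then, with K_z = K_x·K_y, almost surely |Ψ_i − Ψ_{i−1}| ≤ K_z·u·(1+u)^{i−1} for all 1 ≤ i ≤ m−1. -/
open MeasureTheory

lemma karatsuba_tele {Ω : Type*} {m0 : MeasurableSpace Ω} (μ : Measure Ω)
    (Φ : ℕ → Ω → ℝ) (h0 : ∀ ω, Φ 0 ω = 0) (K u : ℝ) (n : ℕ)
    (hstep : ∀ i, 1 ≤ i → i ≤ n →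
      ∀ᵐ ω ∂μ, |Φ i ω - Φ (i - 1) ω| ≤ K * u * (1 + u) ^ (i - 1)) :
    ∀ i ≤ n, ∀ᵐ ω ∂μ, |Φ i ω| ≤ K * ((1 + u) ^ i - 1) := by
  intro i
  induction i with
  | zero =>
    intro _
    filter_upwards with ω
    simp [h0 ω]
  | succ i ih =>
    intro hin
    have h1 := ih (by omega)
    have h2 := hstep (i + 1) (by omega) hin
    filter_upwards [h1, h2] with ω hω1 hω2
    have : |Φ (i + 1) ω| ≤ |Φ (i + 1) ω - Φ i ω| + |Φ i ω| := by
      calc |Φ (i + 1) ω| = |(Φ (i + 1) ω - Φ i ω) + Φ i ω| := by ring_nf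
        _ ≤ _ := abs_add_le _ _
    simp only [Nat.add_sub_cancel] at hω2
    calc |Φ (i + 1) ω| ≤ K * u * (1 + u) ^ i + K * ((1 + u) ^ i - 1) := by
          linarith
      _ = K * ((1 + u) ^ (i + 1) - 1) := by ring

/-- Multiplication case: increment bounds on the martingale `Ψ` built for the last
operation `z ← x × y`, with condition number `K_z = K_x · K_y`, where `m = k + l + 1`. -/
theorem karatsuba_sr_multiplication_increments
    {Ω : Type*} {m0 : MeasurableSpace Ω} (μ : Measure Ω) [IsProbabilityMeasure μ]
    (F : Filtration ℕ m0)
    (k l : ℕ) (hk : 1 ≤ k) (hl : 1 ≤ l)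
    (m : ℕ) (hm : m = k + l + 1)
    (u : ℝ) (hu0 : 0 < u) (hu1 : u < 1)
    (Φ X : ℕ → Ω → ℝ)
    (hΦ0 : ∀ ω, Φ 0 ω = 0) (hX0 : ∀ ω, X 0 ω = 0)
    -- Φ is a martingale w.r.t. F on 0..k-1
    (hΦmeas : ∀ i ≤ k - 1, StronglyMeasurable[F i] (Φ i))
    (hΦint : ∀ i ≤ k - 1, Integrable (Φ i) μ)
    (hΦmart : ∀ i, 1 ≤ i → i ≤ k - 1 → μ[Φ i | F (i - 1)] =ᵐ[μ] Φ (i - 1))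
    -- X is a martingale for the shifted filtration G j = F (k-1+j)
    (hXmeas : ∀ j ≤ l - 1, StronglyMeasurable[F (k - 1 + j)] (X j))
    (hXint : ∀ j ≤ l - 1, Integrable (X j) μ)
    (hXmart : ∀ j, 1 ≤ j → j ≤ l - 1 → μ[X j | F (k - 1 + j - 1)] =ᵐ[μ] X (j - 1))
    -- increment bounds
    (Kx Ky : ℝ) (hKx : 1 ≤ Kx) (hKy : 1 ≤ Ky)
    (hΦstep : ∀ i, 1 ≤ i → i ≤ k - 1 →
      ∀ᵐ ω ∂μ, |Φ i ω - Φ (i - 1) ω| ≤ Kx * u * (1 + u) ^ (i - 1))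
    (hXstep : ∀ j, 1 ≤ j → j ≤ l - 1 →
      ∀ᵐ ω ∂μ, |X j ω - X (j - 1) ω| ≤ Ky * u * (1 + u) ^ (j - 1))
    -- δ is a mean-independent rounding error at time m-1
    (δ : Ω → ℝ)
    (hδmeas : StronglyMeasurable[F (m - 1)] δ)
    (hδbdd : ∀ᵐ ω ∂μ, |δ ω| ≤ u)
    (hδmean : μ[δ | F (m - 2)] =ᵐ[μ] 0)
    -- the process Ψ
    (Ψ : ℕ → Ω → ℝ)
    (hΨ1 : ∀ i ≤ k - 1, ∀ ω, Ψ i ω = Φ i ω)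
    (hΨ2 : ∀ i, k ≤ i → i ≤ m - 2 → ∀ ω,
      Ψ i ω = (1 + Φ (k - 1) ω) * (1 + X (i - k) ω) - 1)
    (hΨ3 : ∀ ω, Ψ (m - 1) ω = (1 + Φ (k - 1) ω) * (1 + X (l - 1) ω) * (1 + δ ω) - 1)
    (Kz : ℝ) (hKz : Kz = Kx * Ky) :
    ∀ i, 1 ≤ i → i ≤ m - 1 →
      ∀ᵐ ω ∂μ, |Ψ i ω - Ψ (i - 1) ω| ≤ Kz * u * (1 + u) ^ (i - 1) := by
  subst hKz
  have hu1' : (1:ℝ) ≤ 1 + u := by linarith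
  have hpow1 : ∀ n : ℕ, (1:ℝ) ≤ (1 + u) ^ n := fun n => one_le_pow₀ hu1'
  have hpospow : ∀ n : ℕ, (0:ℝ) < (1 + u) ^ n := fun n => pow_pos (by linarith) n
  -- bounds on |Φ (k-1)| and |X j|
  have hΦbd : ∀ᵐ ω ∂μ, |Φ (k - 1) ω| ≤ Kx * ((1 + u) ^ (k - 1) - 1) :=
    karatsuba_tele μ Φ hΦ0 Kx u (k - 1) hΦstep (k - 1) le_rfl
  have hXbd : ∀ j ≤ l - 1, ∀ᵐ ω ∂μ, |X j ω| ≤ Ky * ((1 + u) ^ j - 1) :=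
    karatsuba_tele μ X hX0 Ky u (l - 1) hXstep
  -- |1 + Φ (k-1)| ≤ Kx (1+u)^(k-1) a.s.
  have hΦbd' : ∀ᵐ ω ∂μ, |1 + Φ (k - 1) ω| ≤ Kx * (1 + u) ^ (k - 1) := by
    filter_upwards [hΦbd] with ω hω
    have h1 : |1 + Φ (k - 1) ω| ≤ 1 + |Φ (k - 1) ω| := by
      calc |1 + Φ (k - 1) ω| ≤ |(1:ℝ)| + |Φ (k - 1) ω| := abs_add_le _ _
        _ = 1 + |Φ (k - 1) ω| := by rw [abs_one]
    nlinarith [hpow1 (k - 1)]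
  intro i hi1 hi2
  rcases lt_or_ge i k with hikk | hik
  · -- case 1 : 1 ≤ i ≤ k - 1
    have hik1 : i ≤ k - 1 := by omega
    have hstep := hΦstep i hi1 hik1
    filter_upwards [hstep] with ω hω
    rw [hΨ1 i hik1 ω, hΨ1 (i - 1) (by omega) ω]
    have hp := hpospow (i - 1)
    nlinarith [mul_pos (mul_pos (lt_of_lt_of_le zero_lt_one hKx) hu0) hp]
  rcases eq_or_lt_of_le hik with hik' | hik''
  · -- case 2 : i = k
    subst hik'
    have hkm2 : k ≤ m - 2 := by omega
    filter_upwards with ω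
    rw [hΨ2 k le_rfl hkm2 ω, hΨ1 (k - 1) le_rfl ω, Nat.sub_self, hX0 ω]
    have : (1 + Φ (k - 1) ω) * (1 + 0) - 1 - Φ (k - 1) ω = 0 := by ring
    rw [this, abs_zero]
    positivity
  rcases lt_or_ge i (m - 1) with him | him
  · -- case 3 : k + 1 ≤ i ≤ m - 2
    have him2 : i ≤ m - 2 := by omega
    set j := i - k with hj
    have hj1 : 1 ≤ j := by omega
    have hjl : j ≤ l - 1 := by omega
    have hXs := hXstep j hj1 hjl
    filter_upwards [hXs, hΦbd'] with ω hω1 hω2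
    rw [hΨ2 i (by omega) him2 ω, hΨ2 (i - 1) (by omega) (by omega) ω]
    have hidx : i - 1 - k = j - 1 := by omega
    rw [hidx]
    have heq : (1 + Φ (k - 1) ω) * (1 + X j ω) - 1 -
        ((1 + Φ (k - 1) ω) * (1 + X (j - 1) ω) - 1)
        = (1 + Φ (k - 1) ω) * (X j ω - X (j - 1) ω) := by ring
    rw [heq, abs_mul]
    have hb : |1 + Φ (k - 1) ω| * |X j ω - X (j - 1) ω|
        ≤ (Kx * (1 + u) ^ (k - 1)) * (Ky * u * (1 + u) ^ (j - 1)) := by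
      apply mul_le_mul hω2 hω1 (abs_nonneg _)
      positivity
    calc |1 + Φ (k - 1) ω| * |X j ω - X (j - 1) ω|
        ≤ (Kx * (1 + u) ^ (k - 1)) * (Ky * u * (1 + u) ^ (j - 1)) := hb
      _ = Kx * Ky * u * (1 + u) ^ (k - 1 + (j - 1)) := by
          rw [pow_add]; ring
      _ ≤ Kx * Ky * u * (1 + u) ^ (i - 1) := by
          have : (1 + u) ^ (k - 1 + (j - 1)) ≤ (1 + u) ^ (i - 1) :=
            pow_le_pow_right₀ hu1' (by omega)
          have hKxy : (0:ℝ) < Kx * Ky * u := by positivity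
          nlinarith
  · -- case 4 : i = m - 1
    have hieq : i = m - 1 := by omega
    subst hieq
    have hm2k : k ≤ m - 2 := by omega
    have hm2idx : m - 2 - k = l - 1 := by omega
    have hXb := hXbd (l - 1) le_rfl
    filter_upwards [hδbdd, hΦbd', hXb] with ω hδω hΦω hXω
    rw [hΨ3 ω]
    have hi1' : m - 1 - 1 = m - 2 := by omega
    rw [hi1', hΨ2 (m - 2) hm2k le_rfl ω, hm2idx]
    have heq : (1 + Φ (k - 1) ω) * (1 + X (l - 1) ω) * (1 + δ ω) - 1 -
        ((1 + Φ (k - 1) ω) * (1 + X (l - 1) ω) - 1)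
        = (1 + Φ (k - 1) ω) * (1 + X (l - 1) ω) * δ ω := by ring
    rw [heq, abs_mul, abs_mul]
    have hX' : |1 + X (l - 1) ω| ≤ Ky * (1 + u) ^ (l - 1) := by
      have h1 : |1 + X (l - 1) ω| ≤ 1 + |X (l - 1) ω| := by
        calc |1 + X (l - 1) ω| ≤ |(1:ℝ)| + |X (l - 1) ω| := abs_add_le _ _
          _ = 1 + |X (l - 1) ω| := by rw [abs_one]
      nlinarith [hpow1 (l - 1)]
    have hb : |1 + Φ (k - 1) ω| * |1 + X (l - 1) ω| * |δ ω|
        ≤ (Kx * (1 + u) ^ (k - 1)) * (Ky * (1 + u) ^ (l - 1)) * u := by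
      apply mul_le_mul _ hδω (abs_nonneg _) (by positivity)
      apply mul_le_mul hΦω hX' (abs_nonneg _) (by positivity)
    calc |1 + Φ (k - 1) ω| * |1 + X (l - 1) ω| * |δ ω|
        ≤ (Kx * (1 + u) ^ (k - 1)) * (Ky * (1 + u) ^ (l - 1)) * u := hb
      _ = Kx * Ky * u * (1 + u) ^ (k - 1 + (l - 1)) := by rw [pow_add]; ring
      _ ≤ Kx * Ky * u * (1 + u) ^ (m - 1 - 1) := by
          have : (1 + u) ^ (k - 1 + (l - 1)) ≤ (1 + u) ^ (m - 1 - 1) :=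
            pow_le_pow_right₀ hu1' (by omega)
          have hKxy : (0:ℝ) < Kx * Ky * u := by positivity
          nlinarith
end

section
/- Let n ≥ 1 be a natural number, set d = 2^{n+1} − 2 and d' = 2^n − 2, and define f_e(i) = 1 + 3·⌊log₂(min(i+1, e−i+1))⌋ for 0 ≤ i ≤ e (for e ∈ {d, d'}). Then for every index i with 2^{n−1} ≤ i ≤ d − 2^{n−1}, one has f_d(i) = 3 + max{ f_{d'}(j) : j ∈ {i − 2^n, i − 2^{n−1}, i} and 0 ≤ j ≤ d' }. -/
/-! With `h = 2^(n-1)`, a middle index `i` has `min (i+1) (d-i+1) = h + b` for some `0 < b ≤ h`,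
and the candidates `j` that lie in `[0, d']` have `min (j+1) (d'-j+1)` equal to `b` and to `h - b`
(the latter only when it is positive).
Since `fun x => 1 + 3 * log₂ x` is monotone, the supremum is attained at `max b (h - b)`, and
`log₂ (h + b) = log₂ (2 * max b (h - b))` because both numbers lie in `[h, 2h)`, unless `b = h`,
when both equal `2h`. -/

theorem Nat.log_two_pow_add {m b : ℕ} (hb₀ : 0 < b) (hb : b ≤ 2 ^ m) :
    Nat.log 2 (2 ^ m + b) = Nat.log 2 (max b (2 ^ m - b)) + 1 := by
  have same_block : Nat.log 2 (2 ^ m + b) = Nat.log 2 (max b (2 ^ m - b) * 2) := by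
    rcases hb.eq_or_lt with rfl | hlt
    · simp [mul_two]
    · have := pow_succ 2 m
      rw [Nat.log_eq_of_pow_le_of_lt_pow (m := m) (by omega) (by omega),
        Nat.log_eq_of_pow_le_of_lt_pow (m := m) (by omega) (by omega)]
  rw [same_block, Nat.log_mul_base one_lt_two (by omega)]

theorem sup_karatsuba_candidates {g : ℕ → ℕ} (hg : Monotone g) {h i b : ℕ}
    (hi₁ : h ≤ i) (hi₂ : i ≤ 3 * h - 2) (hb : min (i + 1) (4 * h - 2 - i + 1) = h + b) :
    (({(i : ℤ) - 2 * h, (i : ℤ) - h, (i : ℤ)} : Finset ℤ).filter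
        (fun j => 0 ≤ j ∧ j ≤ ((2 * h - 2 : ℕ) : ℤ))).sup
      (fun j => g (min (j.toNat + 1) (2 * h - 2 - j.toNat + 1))) = g (max b (h - b)) := by
  have mem (j : ℤ) (hj : j = i - 2 * h ∨ j = i - h ∨ j = i) (h0 : 0 ≤ j)
      (h1 : j ≤ ((2 * h - 2 : ℕ) : ℤ)) :
      j ∈ (({(i : ℤ) - 2 * h, (i : ℤ) - h, (i : ℤ)} : Finset ℤ).filter
        (fun j => 0 ≤ j ∧ j ≤ ((2 * h - 2 : ℕ) : ℤ))) := by
    simp only [Finset.mem_filter, Finset.mem_insert, Finset.mem_singleton]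
    exact ⟨hj, h0, h1⟩
  -- `b` is attained at `i - h`, and `h - b` at `i` (left half) or at `i - 2h` (right half)
  apply le_antisymm
  · refine Finset.sup_le fun j hj => hg ?_
    simp only [Finset.mem_filter, Finset.mem_insert, Finset.mem_singleton] at hj
    omega
  · rcases le_total (h - b) b with hmax | hmax
    · exact Finset.le_sup_of_le (mem (i - h) (by simp) (by omega) (by omega)) (hg (by omega))
    · rcases le_or_gt i (2 * h - 2) with hleft | hright
      · exact Finset.le_sup_of_le (mem i (by simp) (by omega) (by omega)) (hg (by omega))
      · exact Finset.le_sup_of_le (mem (i - 2 * h) (by simp) (by omega) (by omega)) (hg (by omega))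

/-- Arithmetic core of case (b) of the Karatsuba martingale-length theorem: for
`d = 2^{n+1} − 2`, `d' = 2^n − 2` and a middle index `2^{n−1} ≤ i ≤ d − 2^{n−1}`,
`f_d(i) = 3 + max{ f_{d'}(j) : j ∈ {i − 2^n, i − 2^{n−1}, i}, 0 ≤ j ≤ d' }`,
where `f_e(i) = 1 + 3·⌊log₂(min(i+1, e−i+1))⌋`. -/
theorem karatsuba_length_middle (n : ℕ) (hn : 1 ≤ n) (d d' : ℕ)
    (hd : d = 2 ^ (n + 1) - 2) (hd' : d' = 2 ^ n - 2) :
    ∀ i, 2 ^ (n - 1) ≤ i → i ≤ d - 2 ^ (n - 1) →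
      1 + 3 * Nat.log 2 (min (i + 1) (d - i + 1)) =
        3 + (({(i : ℤ) - 2 ^ n, (i : ℤ) - 2 ^ (n - 1), (i : ℤ)} : Finset ℤ).filter
            (fun j => 0 ≤ j ∧ j ≤ (d' : ℤ))).sup
          (fun j => 1 + 3 * Nat.log 2 (min (j.toNat + 1) (d' - j.toNat + 1))) := by
  intro i hi₁ hi₂
  obtain ⟨m, rfl⟩ : ∃ m, n = m + 1 := ⟨n - 1, by omega⟩
  rw [Nat.add_sub_cancel] at hi₁ hi₂ ⊢
  have hpow : (2 : ℤ) ^ (m + 1) = 2 * ((2 ^ m : ℕ) : ℤ) := by push_cast; ring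
  rw [hpow, show (2 : ℤ) ^ m = ((2 ^ m : ℕ) : ℤ) by push_cast; rfl]
  replace hd : d = 4 * 2 ^ m - 2 := by rw [hd, pow_succ, pow_succ]; ring_nf
  replace hd' : d' = 2 * 2 ^ m - 2 := by rw [hd', pow_succ, mul_comm]
  subst hd hd'
  obtain ⟨b, hb⟩ : ∃ b, min (i + 1) (4 * 2 ^ m - 2 - i + 1) = 2 ^ m + b :=
    ⟨_, (Nat.add_sub_of_le (by omega)).symm⟩
  have hb₀ : 0 < b := by omega
  have hbh : b ≤ 2 ^ m := by have := Nat.two_pow_pos m; omega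
  rw [sup_karatsuba_candidates (g := fun x => 1 + 3 * Nat.log 2 x)
      (fun _ _ hxy => by dsimp only; gcongr) hi₁ (by omega) hb,
    hb, Nat.log_two_pow_add hb₀ hbh]
  ring
end
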